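/- If w contains the pattern 321, then the pair (e, w) is divisible: specifically, if w(i_1) > w(i_2) > w(i_3) with i_1 < i_2 < i_3, then (e,w) is divisible at position i_2 when w(i_2) = i_2, divisible after position i_2 - 1 when w(i_2) < i_2, and divisible after position i_2 when w(i_2) > i_2. -/

import Mathlib

open Equiv

/-- one-line notation (1-based values) of a permutation of `Fin n` -/
def oneLine {n : ℕ} (w : Perm (Fin n)) : List ℕ := List.ofFn fun i => (w i).val + 1

/-- `w` contains the pattern given by the list `p` (distinct positive integers
in one-line notation): some subsequence of `w` has the same relative order. -/
def ContainsPat {n : ℕ} (w : Perm (Fin n)) (p : List ℕ) : Prop :=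
  ∃ f : Fin p.length → Fin n, StrictMono f ∧
    ∀ i j : Fin p.length, p.get i < p.get j ↔ w (f i) < w (f j)

/-- Coxeter length of a permutation = number of inversions -/
def len {n : ℕ} (w : Perm (Fin n)) : ℕ :=
  (Finset.univ.filter fun q : Fin n × Fin n => q.1 < q.2 ∧ w q.2 < w q.1).card

/-- the simple generators `s_i = (i, i+1)` that are left descents of `w` -/
def descentGens {n : ℕ} (w : Perm (Fin n)) : Set (Perm (Fin n)) :=
  {u | ∃ i j : Fin n, (i : ℕ) + 1 = (j : ℕ) ∧ u = Equiv.swap i j ∧ w⁻¹ j < w⁻¹ i}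

/-- `v` is the longest element `w₀(J(w))` of the parabolic subgroup generated by
the left descents of `w` -/
def IsW0J {n : ℕ} (w v : Perm (Fin n)) : Prop :=
  v ∈ Subgroup.closure (descentGens w) ∧
    ∀ u ∈ Subgroup.closure (descentGens w), len u ≤ len v

/-- `v[1,i]`: the set of values in the first `i` positions (`i` is 1-based) -/
def prefSet {n : ℕ} (v : Perm (Fin n)) (i : ℕ) : Finset (Fin n) :=
  (Finset.univ.filter fun j : Fin n => (j : ℕ) < i).image v

/-- `(v,w)` is divisible after position `i` : `|v[1,i] ∩ w[1,i]| ≤ i - 2` -/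
def DivisibleAfter {n : ℕ} (v w : Perm (Fin n)) (i : ℕ) : Prop :=
  (prefSet v i ∩ prefSet w i).card + 2 ≤ i

/-- `(v,w)` is divisible at position `i` : `v(i) = w(i)` and `|v[1,i] ∩ w[1,i]| ≤ i - 1` -/
def DivisibleAt {n : ℕ} (v w : Perm (Fin n)) (i : ℕ) : Prop :=
  ∃ h : i - 1 < n, v ⟨i - 1, h⟩ = w ⟨i - 1, h⟩ ∧ (prefSet v i ∩ prefSet w i).card + 1 ≤ i

/-- `(v,w)` is divisible at or after some position `1 ≤ i ≤ n` -/
def Divisible {n : ℕ} (v w : Perm (Fin n)) : Prop :=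
  ∃ i : ℕ, 1 ≤ i ∧ i ≤ n ∧ (DivisibleAfter v w i ∨ DivisibleAt v w i)

def pat321 : List ℕ := [3, 2, 1]
def pat3412 : List ℕ := [3, 4, 1, 2]

def P321L : List (List ℕ) :=
  [[2,4,5,3,1],[2,5,3,1,4],[2,5,3,4,1],[4,2,5,3,1],[4,5,2,3,1],[4,5,3,1,2],
   [5,2,3,1,4],[5,2,3,4,1],[5,3,1,2,4],[5,3,1,4,2],[5,3,4,1,2]]

def P3412L : List (List ℕ) :=
  [[3,4,5,1,2],[3,4,5,2,1],[3,5,4,1,2],[3,5,4,2,1],[4,5,1,2,3],[4,5,2,1,3],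
   [4,5,2,3,1],[5,3,4,1,2],[5,3,4,2,1],[5,4,1,2,3],[5,4,2,1,3],[5,4,2,3,1]]

def PL : List (List ℕ) :=
  [[2,4,5,3,1],[2,5,3,1,4],[2,5,3,4,1],[3,4,5,1,2],[3,4,5,2,1],[3,5,4,1,2],[3,5,4,2,1],
   [4,2,5,3,1],[4,5,1,2,3],[4,5,2,1,3],[4,5,2,3,1],[4,5,3,1,2],[5,2,3,1,4],[5,2,3,4,1],
   [5,3,1,2,4],[5,3,1,4,2],[5,3,4,1,2],[5,3,4,2,1],[5,4,1,2,3],[5,4,2,1,3],[5,4,2,3,1]]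

/-- Bruhat order: generated by covers `a ⋖ a·t` with `t` a transposition and
`ℓ(a·t) = ℓ(a) + 1` -/
def BruhatLE {n : ℕ} (v w : Perm (Fin n)) : Prop :=
  Relation.ReflTransGen
    (fun a b => (∃ x y : Fin n, x ≠ y ∧ b = a * Equiv.swap x y) ∧ len b = len a + 1) v w

/-- product of a word in the simple generators `s_i = (i, i+1)` -/
def wordProd {n : ℕ} (l : List {i : ℕ // i + 1 < n}) : Perm (Fin n) :=
  (l.map fun i => Equiv.swap (⟨i.1, Nat.lt_of_succ_lt i.2⟩ : Fin n) ⟨i.1 + 1, i.2⟩).prod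

/-- `l` is a reduced word for `w`: a minimal-length expression of `w` as a
product of simple generators -/
def IsReducedWord {n : ℕ} (w : Perm (Fin n)) (l : List {i : ℕ // i + 1 < n}) : Prop :=
  wordProd l = w ∧
    ∀ l' : List {i : ℕ // i + 1 < n}, wordProd l' = w → l.length ≤ l'.length


lemma mem_prefSet {n : ℕ} (w : Perm (Fin n)) (i : ℕ) (x : Fin n) :
    x ∈ prefSet w i ↔ ((w⁻¹ x : Fin n) : ℕ) < i := by
  simp only [prefSet, Finset.mem_image, Finset.mem_filter, Finset.mem_univ, true_and]
  constructor
  · rintro ⟨j, hj, rfl⟩; simpa using hj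
  · intro h; refine ⟨w⁻¹ x, ?_, ?_⟩ <;> simp_all [Perm.inv_def]

lemma card_prefSet {n : ℕ} (w : Perm (Fin n)) (i : ℕ) (hi : i ≤ n) :
    (prefSet w i).card = i := by
  rw [prefSet, Finset.card_image_of_injective _ w.injective]
  have : (Finset.univ.filter fun j : Fin n => (j : ℕ) < i) =
      (Finset.univ : Finset (Fin i)).map (Fin.castLEEmb hi) := by
    ext x
    simp only [Finset.mem_filter, Finset.mem_univ, true_and, Finset.mem_map,
      Fin.castLEEmb_apply]
    constructor
    · intro hx; exact ⟨⟨x, hx⟩, rfl⟩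
    · rintro ⟨y, rfl⟩; exact y.isLt
  rw [this, Finset.card_map, Finset.card_univ, Fintype.card_fin]

lemma card_aux1 {α : Type*} [DecidableEq α] {s t : Finset α} {a : α}
    (hs : s ⊆ t) (ha : a ∈ t) (has : a ∉ s) : s.card + 1 ≤ t.card := by
  have h1 : insert a s ⊆ t := by
    intro x hx
    rcases Finset.mem_insert.mp hx with rfl | hx
    · exact ha
    · exact hs hx
  calc s.card + 1 = (insert a s).card := (Finset.card_insert_of_notMem has).symm
    _ ≤ t.card := Finset.card_le_card h1

lemma card_aux2 {α : Type*} [DecidableEq α] {s t : Finset α} {a b : α}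
    (hs : s ⊆ t) (ha : a ∈ t) (hb : b ∈ t) (has : a ∉ s) (hbs : b ∉ s) (hab : a ≠ b) :
    s.card + 2 ≤ t.card := by
  have h1 : insert a (insert b s) ⊆ t := by
    intro x hx
    simp only [Finset.mem_insert] at hx
    rcases hx with rfl | rfl | hx
    · exact ha
    · exact hb
    · exact hs hx
  have h2 : a ∉ insert b s := by simp [hab, has]
  calc s.card + 2 = (insert a (insert b s)).card := by
        rw [Finset.card_insert_of_notMem h2, Finset.card_insert_of_notMem hbs]
    _ ≤ t.card := Finset.card_le_card h1

theorem stmt6 (n : ℕ) (w : Perm (Fin n)) (i₁ i₂ i₃ : Fin n)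
    (h12 : i₁ < i₂) (h23 : i₂ < i₃) (hw12 : w i₂ < w i₁) (hw23 : w i₃ < w i₂) :
    (w i₂ = i₂ → DivisibleAt 1 w ((i₂ : ℕ) + 1)) ∧
    (w i₂ < i₂ → DivisibleAfter 1 w (i₂ : ℕ)) ∧
    (i₂ < w i₂ → DivisibleAfter 1 w ((i₂ : ℕ) + 1)) := by
  have h1n : (i₂ : ℕ) + 1 ≤ n := by
    have := i₃.isLt
    have : (i₂ : ℕ) < (i₃ : ℕ) := h23
    omega
  have hinv1 : w⁻¹ (w i₁) = i₁ := w.symm_apply_apply i₁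
  have hinv2 : w⁻¹ (w i₂) = i₂ := w.symm_apply_apply i₂
  have hinv3 : w⁻¹ (w i₃) = i₃ := w.symm_apply_apply i₃
  refine ⟨?_, ?_, ?_⟩
  · -- w i₂ = i₂
    intro heq
    refine ⟨by simpa using h1n, ?_, ?_⟩
    · have : (⟨(i₂ : ℕ) + 1 - 1, by simpa using h1n⟩ : Fin n) = i₂ := by
        apply Fin.ext; simp
      rw [this]
      simpa using heq.symm
    · have hsub : prefSet 1 ((i₂ : ℕ) + 1) ∩ prefSet w ((i₂ : ℕ) + 1) ⊆
          prefSet w ((i₂ : ℕ) + 1) := Finset.inter_subset_right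
      have ha : w i₁ ∈ prefSet w ((i₂ : ℕ) + 1) := by
        rw [mem_prefSet, hinv1]
        have : (i₁ : ℕ) < (i₂ : ℕ) := h12
        omega
      have hna : w i₁ ∉ prefSet 1 ((i₂ : ℕ) + 1) ∩ prefSet w ((i₂ : ℕ) + 1) := by
        rw [Finset.mem_inter, mem_prefSet]
        simp only [inv_one, Perm.one_apply]
        have : (w i₂ : ℕ) < (w i₁ : ℕ) := hw12
        have : (i₂ : ℕ) < (w i₁ : ℕ) := by rw [heq] at hw12; exact hw12
        omega
      have := card_aux1 hsub ha hna
      rw [card_prefSet w _ h1n] at this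
      exact this
  · -- w i₂ < i₂
    intro hlt
    have h2n : (i₂ : ℕ) ≤ n := le_of_lt i₂.isLt
    have hsub : prefSet 1 (i₂ : ℕ) ∩ prefSet w (i₂ : ℕ) ⊆ prefSet 1 (i₂ : ℕ) :=
      Finset.inter_subset_left
    have hwlt : (w i₂ : ℕ) < (i₂ : ℕ) := hlt
    have hw23' : (w i₃ : ℕ) < (w i₂ : ℕ) := hw23
    have ha : w i₂ ∈ prefSet 1 (i₂ : ℕ) := by
      rw [mem_prefSet]; simp only [inv_one, Perm.one_apply]; omega
    have hb : w i₃ ∈ prefSet 1 (i₂ : ℕ) := by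
      rw [mem_prefSet]; simp only [inv_one, Perm.one_apply]; omega
    have hna : w i₂ ∉ prefSet 1 (i₂ : ℕ) ∩ prefSet w (i₂ : ℕ) := by
      rw [Finset.mem_inter, mem_prefSet w, hinv2]; simp
    have hnb : w i₃ ∉ prefSet 1 (i₂ : ℕ) ∩ prefSet w (i₂ : ℕ) := by
      rw [Finset.mem_inter, mem_prefSet w, hinv3]
      have : (i₂ : ℕ) < (i₃ : ℕ) := h23
      intro h
      omega
    have hab : w i₂ ≠ w i₃ := fun h => absurd h.symm (ne_of_lt hw23)
    have := card_aux2 hsub ha hb hna hnb hab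
    rwa [card_prefSet 1 _ h2n] at this
  · -- i₂ < w i₂
    intro hlt
    have hsub : prefSet 1 ((i₂ : ℕ) + 1) ∩ prefSet w ((i₂ : ℕ) + 1) ⊆
        prefSet w ((i₂ : ℕ) + 1) := Finset.inter_subset_right
    have hwgt : (i₂ : ℕ) < (w i₂ : ℕ) := hlt
    have hw12' : (w i₂ : ℕ) < (w i₁ : ℕ) := hw12
    have h12' : (i₁ : ℕ) < (i₂ : ℕ) := h12
    have ha : w i₁ ∈ prefSet w ((i₂ : ℕ) + 1) := by rw [mem_prefSet, hinv1]; omega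
    have hb : w i₂ ∈ prefSet w ((i₂ : ℕ) + 1) := by rw [mem_prefSet, hinv2]; omega
    have hna : w i₁ ∉ prefSet 1 ((i₂ : ℕ) + 1) ∩ prefSet w ((i₂ : ℕ) + 1) := by
      rw [Finset.mem_inter, mem_prefSet]
      simp only [inv_one, Perm.one_apply]
      intro h
      omega
    have hnb : w i₂ ∉ prefSet 1 ((i₂ : ℕ) + 1) ∩ prefSet w ((i₂ : ℕ) + 1) := by
      rw [Finset.mem_inter, mem_prefSet]
      simp only [inv_one, Perm.one_apply]
      intro h
      omega
    have hab : w i₁ ≠ w i₂ := fun h => absurd h (ne_of_gt hw12)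
    have := card_aux2 hsub ha hb hna hnb hab
    rwa [card_prefSet w _ h1n] at this
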